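/- Let d be a positive integer and S ⊆ ℝ^d a finite set with at least d + 3 points whose affine span is all of ℝ^d. If T_2(S) has covering dimension at most 0 (every finite open cover of T_2(S) admits a finite open refinement by pairwise disjoint sets), then T_2(S) is a singleton: there exists a unique point p ∈ ℝ^d with T_2(S) = {p}. -/

import Mathlib

/-- The Tverberg set `T_r(S)` of a finite point set `S`: points `p` admitting a
partition of `S` into `r` pairwise disjoint parts whose convex hulls all contain `p`. -/
def TverSet {E : Type*} [AddCommGroup E] [Module ℝ E] (r : ℕ) (S : Finset E) : Set E :=
  {p | ∃ A : Fin r → Finset E,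
    (∀ i j, i ≠ j → Disjoint (A i) (A j)) ∧
    (⋃ i, (A i : Set E)) = (S : Set E) ∧
    ∀ i, p ∈ convexHull ℝ (A i : Set E)}

/-- `X` has covering dimension at most `k`: every finite open cover admits a finite
open refinement in which any `k + 2` distinct members have empty intersection. -/
def CovDimLE (X : Type*) [TopologicalSpace X] (k : ℕ) : Prop :=
  ∀ 𝒰 : Finset (Set X), (∀ U ∈ 𝒰, IsOpen U) → ⋃₀ (𝒰 : Set (Set X)) = Set.univ →
    ∃ 𝒱 : Finset (Set X), (∀ V ∈ 𝒱, IsOpen V) ∧ ⋃₀ (𝒱 : Set (Set X)) = Set.univ ∧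
      (∀ V ∈ 𝒱, ∃ U ∈ 𝒰, V ⊆ U) ∧
      ∀ 𝒮 : Finset (Set X), 𝒮 ⊆ 𝒱 → k + 2 ≤ 𝒮.card → ⋂₀ (𝒮 : Set (Set X)) = ∅

/-!
A nonzero affine dependence `w` of `S` yields a Radon partition `{w > 0} ⊔ {w ≤ 0}`, whose
convex hulls meet in the centre of mass of `w⁺` (equivalently of `w⁻`), and every point of
`T_2(S)` arises this way. So `T_2(S)` is the continuous image of the punctured space of affine
dependences, which has dimension at least `|S| - d - 1 ≥ 2` and is therefore connected.
A connected T1 space of covering dimension `0` is a point: the member containing `a` of a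
disjoint open refinement of `{{a}ᶜ, {b}ᶜ}` is clopen, hence everything, so `a = b`.
-/

section CoveringDimension

open Set

variable {X : Type*} [TopologicalSpace X]

theorem CovDimLE.exists_disjoint_refinement (h : CovDimLE X 0) (𝒰 : Finset (Set X))
    (h𝒰 : ∀ U ∈ 𝒰, IsOpen U) (hcover : ⋃₀ (𝒰 : Set (Set X)) = univ) :
    ∃ 𝒱 : Finset (Set X), (∀ V ∈ 𝒱, IsOpen V) ∧ ⋃₀ (𝒱 : Set (Set X)) = univ ∧
      (∀ V ∈ 𝒱, ∃ U ∈ 𝒰, V ⊆ U) ∧ (𝒱 : Set (Set X)).PairwiseDisjoint id := by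
  obtain ⟨𝒱, hopen, hcover', hrefine, hinter⟩ := h 𝒰 h𝒰 hcover
  refine ⟨𝒱, hopen, hcover', hrefine, fun V hV W hW hVW => ?_⟩
  have hpair := hinter {V, W} (Finset.insert_subset hV (Finset.singleton_subset_iff.2 hW))
    (Finset.card_pair hVW).ge
  simpa [Set.disjoint_iff_inter_eq_empty] using hpair

theorem isClopen_of_mem_of_pairwiseDisjoint {𝒱 : Set (Set X)} (hopen : ∀ V ∈ 𝒱, IsOpen V)
    (hcover : ⋃₀ 𝒱 = univ) (hdisj : 𝒱.PairwiseDisjoint id) {V : Set X} (hV : V ∈ 𝒱) :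
    IsClopen V := by
  refine ⟨closure_subset_iff_isClosed.1 fun x hx => ?_, hopen V hV⟩
  obtain ⟨W, hW, hxW⟩ := Set.mem_sUnion.1 (hcover ▸ Set.mem_univ x)
  obtain ⟨y, hyW, hyV⟩ := mem_closure_iff.1 hx W (hopen W hW) hxW
  by_contra hxV
  have hWV : W ≠ V := by rintro rfl; exact hxV hxW
  exact Set.disjoint_left.1 (hdisj hW hV hWV) hyW hyV

theorem CovDimLE.subsingleton [T1Space X] [PreconnectedSpace X] (h : CovDimLE X 0) :
    Subsingleton X := by
  refine ⟨fun a b => by_contra fun hab => ?_⟩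
  have hcover : ⋃₀ (({{a}ᶜ, {b}ᶜ} : Finset (Set X)) : Set (Set X)) = univ := by
    refine Set.eq_univ_of_forall fun x => ?_
    by_cases hx : x = a
    · subst hx; simpa [eq_comm] using hab
    · simp [hx]
  obtain ⟨𝒱, hopen, hcover', hrefine, hdisj⟩ := h.exists_disjoint_refinement _
    (by simp) hcover
  obtain ⟨V, hV, haV⟩ := Set.mem_sUnion.1 (hcover' ▸ Set.mem_univ a)
  have hVuniv : V = univ :=
    (isClopen_of_mem_of_pairwiseDisjoint (by simpa using hopen) hcover' hdisj hV).eq_univ ⟨a, haV⟩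
  obtain ⟨U, hU, hVU⟩ := hrefine V hV
  simp only [Finset.mem_insert, Finset.mem_singleton] at hU
  rcases hU with rfl | rfl
  · exact hVU haV rfl
  · exact hVU (hVuniv ▸ Set.mem_univ b) rfl

end CoveringDimension

section Radon

open Finset Module

theorem iUnion_fin_two {α : Type*} (f : Fin 2 → Set α) : ⋃ i, f i = f 0 ∪ f 1 := by
  ext
  simp [Fin.exists_fin_two]

theorem Finset.centerMass_mem_convexHull_of_ne_zero {R E ι : Type*} [Field R] [LinearOrder R]
    [IsStrictOrderedRing R] [AddCommGroup E] [Module R E] {s : Set E} (t : Finset ι)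
    {w : ι → R} {z : ι → E} (hw₀ : ∀ i ∈ t, 0 ≤ w i) (hws : 0 < ∑ i ∈ t, w i)
    (hz : ∀ i ∈ t, w i ≠ 0 → z i ∈ s) : t.centerMass w z ∈ convexHull R s := by
  classical
  rw [← centerMass_filter_ne_zero]
  refine centerMass_mem_convexHull _ (fun i hi => hw₀ i (mem_filter.1 hi).1)
    (by rwa [sum_filter_ne_zero]) fun i hi => hz i (mem_filter.1 hi).1 (mem_filter.1 hi).2

theorem Finset.sum_coe_sort_ite_mem {ι M : Type*} [AddCommMonoid M] [DecidableEq ι]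
    {A S : Finset ι} (hAS : A ⊆ S) (f : ι → M) :
    ∑ s : S, (if (s : ι) ∈ A then f s else 0) = ∑ i ∈ A, f i := by
  rw [sum_coe_sort S fun i => if i ∈ A then f i else 0, sum_ite_mem, inter_eq_right.2 hAS]

theorem sum_posPart_smul_eq_sum_negPart_smul {ι M : Type*} [Fintype ι] [AddCommGroup M]
    [Module ℝ M] {w : ι → ℝ} {z : ι → M} (h : ∑ i, w i • z i = 0) :
    ∑ i, (w i)⁺ • z i = ∑ i, (w i)⁻ • z i := by
  rw [← sub_eq_zero, ← Finset.sum_sub_distrib]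
  simpa only [← sub_smul, posPart_sub_negPart] using h

variable {E : Type*} [AddCommGroup E] [Module ℝ E] {S : Finset E}

theorem mem_tverSet_two_iff [DecidableEq E] {p : E} :
    p ∈ TverSet 2 S ↔ ∃ A ⊆ S, p ∈ convexHull ℝ (A : Set E) ∧ p ∈ convexHull ℝ ↑(S \ A) := by
  constructor
  · rintro ⟨A, hdisj, hunion, hp⟩
    have hS : S = A 0 ∪ A 1 := by
      rw [← Finset.coe_inj, Finset.coe_union, ← hunion, iUnion_fin_two]
    refine ⟨A 0, hS ▸ Finset.subset_union_left, hp 0, ?_⟩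
    rw [hS, Finset.union_sdiff_cancel_left (hdisj 0 1 (by decide))]
    exact hp 1
  · rintro ⟨A, hAS, hpA, hpB⟩
    refine ⟨![A, S \ A], ?_, ?_, ?_⟩
    · intro i j hij
      fin_cases i <;> fin_cases j <;> simp_all [disjoint_sdiff, sdiff_disjoint]
    · rw [iUnion_fin_two]
      simp [Finset.coe_sdiff, Set.union_sdiff_cancel (Finset.coe_subset.2 hAS)]
    · intro i
      fin_cases i
      exacts [hpA, hpB]

noncomputable def affineDependences (S : Finset E) : Submodule ℝ (S → ℝ) :=
  LinearMap.ker (Fintype.linearCombination ℝ fun s : S => ((s : E), (1 : ℝ)))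

theorem mem_affineDependences {w : S → ℝ} :
    w ∈ affineDependences S ↔ ∑ s, w s • (s : E) = 0 ∧ ∑ s, w s = 0 := by
  simp [affineDependences, Fintype.linearCombination_apply, Prod.ext_iff, Prod.fst_sum,
    Prod.snd_sum]

theorem card_le_finrank_affineDependences [FiniteDimensional ℝ E] (S : Finset E) :
    S.card ≤ finrank ℝ (affineDependences S) + finrank ℝ E + 1 := by
  have hrank := LinearMap.finrank_range_add_finrank_ker
    (Fintype.linearCombination ℝ fun s : S => ((s : E), (1 : ℝ)))
  have hrange := Submodule.finrank_le
    (LinearMap.range (Fintype.linearCombination ℝ fun s : S => ((s : E), (1 : ℝ))))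
  rw [Module.finrank_fintype_fun_eq_card, Fintype.card_coe] at hrank
  rw [Module.finrank_prod, Module.finrank_self] at hrange
  rw [affineDependences]
  omega

noncomputable def radonPoint (w : S → ℝ) : E :=
  univ.centerMass (fun s => (w s)⁺) ((↑) : S → E)

theorem sum_posPart_pos {w : S → ℝ} (hw : w ∈ affineDependences S) (hw0 : w ≠ 0) :
    0 < ∑ s, (w s)⁺ := by
  refine (Finset.sum_nonneg fun s _ => posPart_nonneg (w s)).lt_of_ne' fun hsum => hw0 ?_
  have hnonpos : ∀ s ∈ univ, w s ≤ 0 := fun s _ =>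
    posPart_eq_zero.1 ((Finset.sum_eq_zero_iff_of_nonneg fun s _ => posPart_nonneg _).1 hsum s
      (mem_univ s))
  funext s
  exact (Finset.sum_eq_zero_iff_of_nonpos hnonpos).1 (mem_affineDependences.1 hw).2 s (mem_univ s)

theorem sum_posPart_eq_sum_negPart {w : S → ℝ} (hw : w ∈ affineDependences S) :
    ∑ s, (w s)⁺ = ∑ s, (w s)⁻ := by
  have h := sum_posPart_smul_eq_sum_negPart_smul (w := w) (z := fun _ => (1 : ℝ))
    (by simpa only [smul_eq_mul, mul_one] using (mem_affineDependences.1 hw).2)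
  simpa only [smul_eq_mul, mul_one] using h

theorem radonPoint_eq_centerMass_negPart {w : S → ℝ} (hw : w ∈ affineDependences S) :
    radonPoint w = univ.centerMass (fun s => (w s)⁻) ((↑) : S → E) := by
  rw [radonPoint, centerMass, centerMass, sum_posPart_eq_sum_negPart hw,
    sum_posPart_smul_eq_sum_negPart_smul (mem_affineDependences.1 hw).1]

theorem radonPoint_mem_tverSet_two {w : S → ℝ} (hw : w ∈ affineDependences S)
    (hw0 : w ≠ 0) : radonPoint w ∈ TverSet 2 S := by
  classical
  set A : Finset E := (univ.filter fun s : S => 0 < w s).image Subtype.val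
  have hpos := sum_posPart_pos hw hw0
  refine mem_tverSet_two_iff.2 ⟨A, ?_, ?_, ?_⟩
  · intro x hx
    obtain ⟨s, -, rfl⟩ := mem_image.1 hx
    exact s.2
  · refine univ.centerMass_mem_convexHull_of_ne_zero (fun s _ => posPart_nonneg _) hpos
      fun s _ hs => mem_image_of_mem _ (mem_filter.2 ⟨mem_univ _, ?_⟩)
    exact posPart_pos_iff.1 ((posPart_nonneg _).lt_of_ne' hs)
  · rw [radonPoint_eq_centerMass_negPart hw]
    refine univ.centerMass_mem_convexHull_of_ne_zero (fun s _ => negPart_nonneg _)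
      (sum_posPart_eq_sum_negPart hw ▸ hpos) fun s _ hs => ?_
    have hneg : w s < 0 := negPart_pos_iff.1 ((negPart_nonneg _).lt_of_ne' hs)
    rw [mem_coe, mem_sdiff, Subtype.val_injective.mem_finset_image]
    exact ⟨s.2, fun h => (mem_filter.1 h).2.not_gt hneg⟩

theorem exists_weights_of_mem_convexHull {A : Finset E} (hAS : A ⊆ S) {p : E}
    (hp : p ∈ convexHull ℝ (A : Set E)) :
    ∃ a : S → ℝ, 0 ≤ a ∧ (∀ s, a s ≠ 0 → ↑s ∈ A) ∧ ∑ s, a s = 1 ∧ ∑ s, a s • (s : E) = p := by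
  classical
  obtain ⟨b, hb0, hb1, hbp⟩ := Finset.mem_convexHull'.1 hp
  refine ⟨fun s => if ↑s ∈ A then b s else 0, fun s => ?_, fun s hs => ?_, ?_, ?_⟩
  · dsimp only
    split_ifs with h
    exacts [hb0 _ h, le_rfl]
  · by_contra h
    exact hs (if_neg h)
  · rw [sum_coe_sort_ite_mem hAS, hb1]
  · simp only [ite_smul, zero_smul]
    rw [sum_coe_sort_ite_mem hAS (fun x => b x • x), hbp]

theorem exists_radonPoint_eq {p : E} (hp : p ∈ TverSet 2 S) :
    ∃ w ∈ affineDependences S, w ≠ 0 ∧ radonPoint w = p := by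
  classical
  obtain ⟨A, hAS, hpA, hpB⟩ := mem_tverSet_two_iff.1 hp
  obtain ⟨a, ha0, haA, ha1, hap⟩ := exists_weights_of_mem_convexHull hAS hpA
  obtain ⟨b, hb0, hbB, hb1, hbp⟩ := exists_weights_of_mem_convexHull sdiff_subset hpB
  have hpos : ∀ s, (a s - b s)⁺ = a s := fun s => by
    by_cases has : a s = 0
    · simpa [has] using hb0 s
    · have hbs : b s = 0 := by_contra fun hbs => (mem_sdiff.1 (hbB s hbs)).2 (haA s has)
      simpa [hbs] using ha0 s
  have hdep : a - b ∈ affineDependences S := by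
    rw [mem_affineDependences]
    simp only [Pi.sub_apply, sub_smul, Finset.sum_sub_distrib, ha1, hb1, hap, hbp, sub_self,
      and_self]
  refine ⟨a - b, hdep, fun h => ?_, ?_⟩
  · have : a = 0 := funext fun s => by simpa [hpos] using congrFun (congrArg (·⁺) h) s
    simp [this] at ha1
  · simp only [radonPoint, Pi.sub_apply, hpos, centerMass, ha1, hap, inv_one, one_smul]

theorem tverSet_two_eq_image_radonPoint :
    TverSet 2 S = (fun w : affineDependences S => radonPoint (w : S → ℝ)) '' {0}ᶜ := by
  ext p
  constructor
  · intro hp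
    obtain ⟨w, hw, hw0, rfl⟩ := exists_radonPoint_eq hp
    exact ⟨⟨w, hw⟩, fun h => hw0 (congrArg Subtype.val h), rfl⟩
  · rintro ⟨w, hw0, rfl⟩
    exact radonPoint_mem_tverSet_two w.2 fun h => hw0 (Subtype.ext h)

section Topology

variable [TopologicalSpace E] [IsTopologicalAddGroup E] [ContinuousSMul ℝ E]

theorem continuousOn_radonPoint :
    ContinuousOn (radonPoint : (S → ℝ) → E) {w | ∑ s, (w s)⁺ ≠ 0} := by
  have hpos (s : S) : Continuous fun w : S → ℝ => (w s)⁺ :=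
    continuous_posPart.comp (continuous_apply s)
  refine ContinuousOn.smul (ContinuousOn.inv₀ ?_ fun w hw => hw) ?_
  · exact (continuous_finsetSum _ fun s _ => hpos s).continuousOn
  · exact (continuous_finsetSum _ fun s _ => (hpos s).smul continuous_const).continuousOn

theorem isConnected_tverSet_two [FiniteDimensional ℝ E] (hS : finrank ℝ E + 3 ≤ S.card) :
    IsConnected (TverSet 2 S) := by
  have hdim : 1 < finrank ℝ (affineDependences S) := by
    have := card_le_finrank_affineDependences S
    omega
  rw [tverSet_two_eq_image_radonPoint]
  have hK := isConnected_compl_singleton_of_one_lt_rank (one_lt_rank_of_one_lt_finrank hdim) 0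
  refine hK.image _ (continuousOn_radonPoint.comp continuous_subtype_val.continuousOn ?_)
  exact fun w hw => (sum_posPart_pos w.2 fun h => hw (Subtype.ext h)).ne'

end Topology

end Radon

theorem radon_set_singleton_general
    (d : ℕ) (S : Finset (Fin d → ℝ))
    (hcard : d + 3 ≤ S.card)
    (hdim : CovDimLE ↥(TverSet 2 S) 0) :
    ∃! p : Fin d → ℝ, TverSet 2 S = {p} := by
  have hconn : IsConnected (TverSet 2 S) :=
    isConnected_tverSet_two (by rwa [Module.finrank_fin_fun])
  have : PreconnectedSpace (TverSet 2 S) := Subtype.preconnectedSpace hconn.isPreconnected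
  obtain ⟨p, hp⟩ := hconn.nonempty
  have hT : TverSet 2 S = {p} :=
    ((Set.subsingleton_coe _).1 hdim.subsingleton).eq_singleton_of_mem hp
  exact ⟨p, hT, fun q hq => Set.singleton_eq_singleton_iff.1 (hq.symm.trans hT)⟩

theorem radon_set_singleton
    (d : ℕ) (hd : 0 < d) (S : Finset (Fin d → ℝ))
    (hcard : d + 3 ≤ S.card)
    (hspan : affineSpan ℝ (S : Set (Fin d → ℝ)) = ⊤)
    (hdim : CovDimLE ↥(TverSet 2 S) 0) :
    ∃! p : Fin d → ℝ, TverSet 2 S = {p} :=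
  radon_set_singleton_general d S hcard hdim
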